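/- arXiv:2601.11992 — 2 statements merged into one kernel-verified Lean document; each statement's English description precedes it below -/
import Mathlib

section
/- Let h_xy = 1 + xy + x²y². The image of the map d²: C[x,y]² → C[x,y], d²(f¹,f²) = δ¹f¹ + δ²f² (with δ¹, δ² as above), equals the C-span of the set {(i+j)·h_xy·x^i y^j : i,j ≥ 0} ∪ {(j−i)·x^i y^j : i,j ≥ 0}; equivalently, Im d² = span{h_xy x^i y^j : (i,j) ≠ (0,0)} + span{x^i y^j : i ≠ j}. -/
open MvPolynomial

noncomputable section

abbrev A2 := MvPolynomial (Fin 2) ℂ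

def hxy : A2 := 1 + X 0 * X 1 + X 0 ^ 2 * X 1 ^ 2

def δ1 (f : A2) : A2 :=
  (X 0 + X 0 ^ 2 * X 1 + X 0 ^ 3 * X 1 ^ 2) * pderiv 0 f
    + (X 1 + X 0 * X 1 ^ 2 + X 0 ^ 2 * X 1 ^ 3) * pderiv 1 f

def δ2 (f : A2) : A2 := X 1 * pderiv 1 f - X 0 * pderiv 0 f

-- Euler-type lemmas
lemma euler0 (i j : ℕ) :
    (X 0 : A2) * pderiv 0 (X 0 ^ i * X 1 ^ j) = (i : ℂ) • (X 0 ^ i * X 1 ^ j) := by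
  have h1 : pderiv (0 : Fin 2) ((X 1 : A2) ^ j) = 0 := by
    simp [pderiv_pow, pderiv_X_of_ne (by decide : (1 : Fin 2) ≠ 0)]
  cases i with
  | zero => simp [pderiv_mul, h1]
  | succ k =>
    simp only [pderiv_mul, h1, mul_zero, add_zero, pderiv_pow, pderiv_X_self, mul_one,
      smul_eq_C_mul, Nat.cast_add, Nat.cast_one, map_add, map_one, Nat.add_sub_cancel]
    rw [show ((C (k:ℂ)) : A2) = ((k:ℕ) : A2) from map_natCast C k]
    ring

lemma euler1 (i j : ℕ) :
    (X 1 : A2) * pderiv 1 (X 0 ^ i * X 1 ^ j) = (j : ℂ) • (X 0 ^ i * X 1 ^ j) := by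
  have h1 : pderiv (1 : Fin 2) ((X 0 : A2) ^ i) = 0 := by
    simp [pderiv_pow, pderiv_X_of_ne (by decide : (0 : Fin 2) ≠ 1)]
  cases j with
  | zero => simp [pderiv_mul, h1]
  | succ k =>
    simp only [pderiv_mul, h1, zero_mul, zero_add, pderiv_pow, pderiv_X_self, mul_one,
      smul_eq_C_mul, Nat.cast_add, Nat.cast_one, map_add, map_one, Nat.add_sub_cancel]
    rw [show ((C (k:ℂ)) : A2) = ((k:ℕ) : A2) from map_natCast C k]
    ring

lemma delta1_monomial (i j : ℕ) :
    δ1 (X 0 ^ i * X 1 ^ j) = ((i : ℂ) + j) • (hxy * X 0 ^ i * X 1 ^ j) := by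
  have e0 := euler0 i j
  have e1 := euler1 i j
  unfold δ1 hxy
  have : (X 0 + X 0 ^ 2 * X 1 + X 0 ^ 3 * X 1 ^ 2 : A2) * pderiv 0 (X 0 ^ i * X 1 ^ j)
      = (1 + X 0 * X 1 + X 0 ^ 2 * X 1 ^ 2) * (X 0 * pderiv 0 (X 0 ^ i * X 1 ^ j)) := by ring
  rw [this, e0]
  have : (X 1 + X 0 * X 1 ^ 2 + X 0 ^ 2 * X 1 ^ 3 : A2) * pderiv 1 (X 0 ^ i * X 1 ^ j)
      = (1 + X 0 * X 1 + X 0 ^ 2 * X 1 ^ 2) * (X 1 * pderiv 1 (X 0 ^ i * X 1 ^ j)) := by ring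
  rw [this, e1]
  rw [mul_smul_comm, mul_smul_comm, ← add_smul, mul_assoc]

lemma delta2_monomial (i j : ℕ) :
    δ2 (X 0 ^ i * X 1 ^ j) = ((j : ℂ) - i) • (X 0 ^ i * X 1 ^ j) := by
  unfold δ2
  rw [euler0, euler1, ← sub_smul]

def D1 : A2 →ₗ[ℂ] A2 where
  toFun := δ1
  map_add' f g := by simp [δ1]; ring
  map_smul' c f := by simp [δ1, mul_smul_comm, smul_add]

def D2 : A2 →ₗ[ℂ] A2 where
  toFun := δ2
  map_add' f g := by simp [δ2]; ring
  map_smul' c f := by simp [δ2, mul_smul_comm, smul_sub]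

def Mon : Set A2 := {q : A2 | ∃ i j : ℕ, q = X 0 ^ i * X 1 ^ j}

lemma mem_span_Mon (p : A2) : p ∈ Submodule.span ℂ Mon := by
  induction p using MvPolynomial.induction_on with
  | C a =>
    have : (C a : A2) = a • (X 0 ^ 0 * X 1 ^ 0) := by simp [smul_eq_C_mul]
    rw [this]
    exact Submodule.smul_mem _ _ (Submodule.subset_span ⟨0, 0, rfl⟩)
  | add p q hp hq => exact Submodule.add_mem _ hp hq
  | mul_X p n hp =>
    have key : ∀ r ∈ Submodule.span ℂ Mon, r * X n ∈ Submodule.span ℂ Mon := by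
      intro r hr
      induction hr using Submodule.span_induction with
      | mem x hx =>
        obtain ⟨i, j, rfl⟩ := hx
        fin_cases n
        · refine Submodule.subset_span ⟨i + 1, j, ?_⟩
          show X 0 ^ i * X 1 ^ j * X 0 = _
          ring
        · refine Submodule.subset_span ⟨i, j + 1, ?_⟩
          show X 0 ^ i * X 1 ^ j * X 1 = _
          ring
      | zero => simpa using Submodule.zero_mem _
      | add x y _ _ hx hy => rw [add_mul]; exact Submodule.add_mem _ hx hy
      | smul c x _ hx => rw [smul_mul_assoc]; exact Submodule.smul_mem _ _ hx
    exact key p hp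

lemma span_Mon : Submodule.span ℂ Mon = ⊤ :=
  eq_top_iff.mpr fun p _ => mem_span_Mon p

/-- `Im d²` equals the span of `{(i+j)·h_xy·xⁱyʲ} ∪ {(j−i)·xⁱyʲ}`, equivalently the span of
`{h_xy·xⁱyʲ : (i,j) ≠ (0,0)} ∪ {xⁱyʲ : i ≠ j}`. -/
theorem stmt16 :
    (∀ g : A2, (∃ f1 f2 : A2, δ1 f1 + δ2 f2 = g) ↔
      g ∈ Submodule.span ℂ
        (({q : A2 | ∃ i j : ℕ, q = (((i : ℂ) + j)) • (hxy * X 0 ^ i * X 1 ^ j)}) ∪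
         ({q : A2 | ∃ i j : ℕ, q = ((j : ℂ) - i) • (X 0 ^ i * X 1 ^ j)}))) ∧
    Submodule.span ℂ
        (({q : A2 | ∃ i j : ℕ, q = (((i : ℂ) + j)) • (hxy * X 0 ^ i * X 1 ^ j)}) ∪
         ({q : A2 | ∃ i j : ℕ, q = ((j : ℂ) - i) • (X 0 ^ i * X 1 ^ j)}))
      = Submodule.span ℂ
        (({q : A2 | ∃ i j : ℕ, (i, j) ≠ (0, 0) ∧ q = hxy * X 0 ^ i * X 1 ^ j}) ∪
         ({q : A2 | ∃ i j : ℕ, i ≠ j ∧ q = X 0 ^ i * X 1 ^ j})) := by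
  set S1 : Set A2 := {q : A2 | ∃ i j : ℕ, q = (((i : ℂ) + j)) • (hxy * X 0 ^ i * X 1 ^ j)}
  set S2 : Set A2 := {q : A2 | ∃ i j : ℕ, q = ((j : ℂ) - i) • (X 0 ^ i * X 1 ^ j)}
  have hS1 : D1 '' Mon = S1 := by
    ext q
    constructor
    · rintro ⟨m, ⟨i, j, rfl⟩, rfl⟩
      exact ⟨i, j, (delta1_monomial i j).symm ▸ rfl⟩
    · rintro ⟨i, j, rfl⟩
      exact ⟨X 0 ^ i * X 1 ^ j, ⟨i, j, rfl⟩, delta1_monomial i j⟩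
  have hS2 : D2 '' Mon = S2 := by
    ext q
    constructor
    · rintro ⟨m, ⟨i, j, rfl⟩, rfl⟩
      exact ⟨i, j, (delta2_monomial i j).symm ▸ rfl⟩
    · rintro ⟨i, j, rfl⟩
      exact ⟨X 0 ^ i * X 1 ^ j, ⟨i, j, rfl⟩, delta2_monomial i j⟩
  constructor
  · intro g
    have hrange : (∃ f1 f2 : A2, δ1 f1 + δ2 f2 = g) ↔ g ∈ LinearMap.range (D1.coprod D2) := by
      constructor
      · rintro ⟨f1, f2, h⟩; exact ⟨(f1, f2), h⟩
      · rintro ⟨⟨f1, f2⟩, h⟩; exact ⟨f1, f2, h⟩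
    rw [hrange, LinearMap.range_coprod]
    have r1 : LinearMap.range D1 = Submodule.span ℂ S1 := by
      rw [LinearMap.range_eq_map, ← span_Mon, Submodule.map_span, hS1]
    have r2 : LinearMap.range D2 = Submodule.span ℂ S2 := by
      rw [LinearMap.range_eq_map, ← span_Mon, Submodule.map_span, hS2]
    rw [r1, r2, ← Submodule.span_union]
  · apply le_antisymm
    · rw [Submodule.span_le]
      rintro q (⟨i, j, rfl⟩ | ⟨i, j, rfl⟩)
      · by_cases h : (i, j) = (0, 0)
        · rw [Prod.mk.injEq] at h
          obtain ⟨rfl, rfl⟩ := h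
          simp
        · exact Submodule.smul_mem _ _
            (Submodule.subset_span (Set.mem_union_left _ ⟨i, j, h, rfl⟩))
      · by_cases h : i = j
        · subst h; simp
        · exact Submodule.smul_mem _ _
            (Submodule.subset_span (Set.mem_union_right _ ⟨i, j, h, rfl⟩))
    · rw [Submodule.span_le]
      rintro q (⟨i, j, hij, rfl⟩ | ⟨i, j, hij, rfl⟩)
      · have hne : ((i : ℂ) + j) ≠ 0 := by
          have h0 : i + j ≠ 0 := by
            rintro h
            apply hij
            rw [Prod.mk.injEq]
            omega
          exact_mod_cast h0
        have : (hxy * X 0 ^ i * X 1 ^ j : A2)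
            = ((i : ℂ) + j)⁻¹ • (((i : ℂ) + j) • (hxy * X 0 ^ i * X 1 ^ j)) := by
          rw [smul_smul, inv_mul_cancel₀ hne, one_smul]
        rw [this]
        exact Submodule.smul_mem _ _
          (Submodule.subset_span (Set.mem_union_left _ ⟨i, j, rfl⟩))
      · have hne : ((j : ℂ) - i) ≠ 0 := by
          rw [sub_ne_zero]
          exact fun h => hij (Nat.cast_injective h).symm
        have : (X 0 ^ i * X 1 ^ j : A2)
            = ((j : ℂ) - i)⁻¹ • (((j : ℂ) - i) • (X 0 ^ i * X 1 ^ j)) := by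
          rw [smul_smul, inv_mul_cancel₀ hne, one_smul]
        rw [this]
        exact Submodule.smul_mem _ _
          (Submodule.subset_span (Set.mem_union_right _ ⟨i, j, rfl⟩))

end
end

section
/- For h = Σ_{i=1}^m α_i x₁^{n_i} x₂^{n_i} in C[x₁,x₂] with all n_i > 0, the derivations δ¹ = (Σ_{i=1}^m α_i x₁^{n_i−1} x₂^{n_i−1})·(x₁∂₁ + x₂∂₂) and δ² = x₂∂₂ − x₁∂₁ satisfy: δ²(h) = 0, δ¹(h) = (Σ_i 2n_i α_i x₁^{n_i−1} x₂^{n_i−1})·h ∈ (h), and the determinant of their Saito matrix equals 2h; hence (δ¹, δ²) is a free Saito basis of Der(log D) for D = {h = 0}. -/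
open MvPolynomial

private lemma keyl19 (i : Fin 2) (n : ℕ) (hn : 0 < n) :
    (X i : MvPolynomial (Fin 2) ℂ) * pderiv i (X i ^ n) = C (n : ℂ) * X i ^ n := by
  rw [pderiv_pow, pderiv_X_self, mul_one, mul_comm (X i), mul_assoc,
    ← pow_succ, Nat.sub_add_cancel hn, C_eq_coe_nat]

private lemma term0_19 (a : ℂ) (n : ℕ) (hn : 0 < n) :
    (X 0 : MvPolynomial (Fin 2) ℂ) * pderiv 0 (C a * X 0 ^ n * X 1 ^ n)
      = C ((n : ℂ) * a) * X 0 ^ n * X 1 ^ n := by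
  have h1 : pderiv 0 ((X 1 : MvPolynomial (Fin 2) ℂ) ^ n) = 0 := by
    rw [pderiv_pow, pderiv_X_of_ne (by decide), mul_zero]
  rw [pderiv_mul, h1, mul_zero, add_zero, pderiv_C_mul]
  rw [show (X 0 : MvPolynomial (Fin 2) ℂ) * (C a * pderiv 0 (X 0 ^ n) * X 1 ^ n)
      = C a * (X 0 * pderiv 0 (X 0 ^ n)) * X 1 ^ n by ring, keyl19 0 n hn, C_mul]
  ring

private lemma term1_19 (a : ℂ) (n : ℕ) (hn : 0 < n) :
    (X 1 : MvPolynomial (Fin 2) ℂ) * pderiv 1 (C a * X 0 ^ n * X 1 ^ n)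
      = C ((n : ℂ) * a) * X 0 ^ n * X 1 ^ n := by
  have h1 : pderiv 1 ((X 0 : MvPolynomial (Fin 2) ℂ) ^ n) = 0 := by
    rw [pderiv_pow, pderiv_X_of_ne (by decide), mul_zero]
  rw [show C a * (X 0 : MvPolynomial (Fin 2) ℂ) ^ n * X 1 ^ n
      = C a * X 1 ^ n * X 0 ^ n by ring, pderiv_mul, h1, mul_zero, add_zero, pderiv_C_mul]
  rw [show (X 1 : MvPolynomial (Fin 2) ℂ) * (C a * pderiv 1 (X 1 ^ n) * X 0 ^ n)
      = C a * (X 1 * pderiv 1 (X 1 ^ n)) * X 0 ^ n by ring, keyl19 1 n hn, C_mul]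
  ring

/-- For `h = Σ αᵢ x₁^{nᵢ} x₂^{nᵢ}` with distinct `nᵢ > 0`, setting
`s = Σ αᵢ x₁^{nᵢ−1} x₂^{nᵢ−1}`, the derivations `δ¹ = s·(x₁∂₁ + x₂∂₂)` and
`δ² = x₂∂₂ − x₁∂₁` satisfy `δ²(h) = 0`, `δ¹(h) = (Σ 2nᵢαᵢ x₁^{nᵢ−1}x₂^{nᵢ−1})·h ∈ (h)`,
and their Saito matrix has determinant `2h`. -/
theorem stmt19 (m : ℕ) (α : ℕ → ℂ) (e : ℕ → ℕ)
    (he : ∀ i ∈ Finset.range m, 0 < e i) (hinj : Set.InjOn e (Finset.range m))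
    (h s : MvPolynomial (Fin 2) ℂ)
    (hh : h = ∑ i ∈ Finset.range m, C (α i) * X 0 ^ e i * X 1 ^ e i)
    (hs : s = ∑ i ∈ Finset.range m, C (α i) * X 0 ^ (e i - 1) * X 1 ^ (e i - 1)) :
    X 1 * pderiv 1 h - X 0 * pderiv 0 h = 0 ∧
    s * (X 0 * pderiv 0 h + X 1 * pderiv 1 h)
      = (∑ i ∈ Finset.range m,
          C (2 * (e i : ℂ) * α i) * X 0 ^ (e i - 1) * X 1 ^ (e i - 1)) * h ∧
    s * (X 0 * pderiv 0 h + X 1 * pderiv 1 h) ∈ Ideal.span {h} ∧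
    Matrix.det !![s * X 0, s * X 1; -X 0, X 1] = 2 * h := by
  have hd0 : X 0 * pderiv 0 h
      = ∑ i ∈ Finset.range m, C ((e i : ℂ) * α i) * X 0 ^ e i * X 1 ^ e i := by
    rw [hh, map_sum, Finset.mul_sum]
    exact Finset.sum_congr rfl fun i hi => term0_19 (α i) (e i) (he i hi)
  have hd1 : X 1 * pderiv 1 h
      = ∑ i ∈ Finset.range m, C ((e i : ℂ) * α i) * X 0 ^ e i * X 1 ^ e i := by
    rw [hh, map_sum, Finset.mul_sum]
    exact Finset.sum_congr rfl fun i hi => term1_19 (α i) (e i) (he i hi)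
  have p1 : X 1 * pderiv 1 h - X 0 * pderiv 0 h = 0 := by
    rw [hd0, hd1, sub_self]
  have p2 : s * (X 0 * pderiv 0 h + X 1 * pderiv 1 h)
      = (∑ i ∈ Finset.range m,
          C (2 * (e i : ℂ) * α i) * X 0 ^ (e i - 1) * X 1 ^ (e i - 1)) * h := by
    rw [hd0, hd1, ← two_mul, hs, hh, Finset.sum_mul, Finset.sum_mul]
    simp only [Finset.mul_sum]
    rw [Finset.sum_comm]
    refine Finset.sum_congr rfl fun j hj => Finset.sum_congr rfl fun i hi => ?_
    have hi1 := he i hi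
    have hj1 := he j hj
    have h0 : (X 0 : MvPolynomial (Fin 2) ℂ) ^ (e i - 1) * X 0 ^ e j
        = X 0 ^ (e j - 1) * X 0 ^ e i := by
      rw [← pow_add, ← pow_add]; congr 1; omega
    have h1 : (X 1 : MvPolynomial (Fin 2) ℂ) ^ (e i - 1) * X 1 ^ e j
        = X 1 ^ (e j - 1) * X 1 ^ e i := by
      rw [← pow_add, ← pow_add]; congr 1; omega
    calc (C (α i) : MvPolynomial (Fin 2) ℂ) * X 0 ^ (e i - 1) * X 1 ^ (e i - 1)
          * (2 * (C ((e j : ℂ) * α j) * X 0 ^ e j * X 1 ^ e j))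
        = (C (α i) * (2 * C ((e j : ℂ) * α j)))
            * ((X 0 ^ (e i - 1) * X 0 ^ e j) * (X 1 ^ (e i - 1) * X 1 ^ e j)) := by ring
      _ = (C (α i) * (2 * C ((e j : ℂ) * α j)))
            * ((X 0 ^ (e j - 1) * X 0 ^ e i) * (X 1 ^ (e j - 1) * X 1 ^ e i)) := by
            rw [h0, h1]
      _ = C (2 * (e j : ℂ) * α j) * X 0 ^ (e j - 1) * X 1 ^ (e j - 1)
            * (C (α i) * X 0 ^ e i * X 1 ^ e i) := by
            simp only [C_mul, map_ofNat]
            ring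
  refine ⟨p1, p2, ?_, ?_⟩
  · rw [p2, Ideal.mem_span_singleton]
    exact dvd_mul_left h _
  · have hsx : s * X 0 * X 1 = h := by
      rw [hs, hh, Finset.sum_mul, Finset.sum_mul]
      refine Finset.sum_congr rfl fun i hi => ?_
      have hi1 := he i hi
      calc (C (α i) : MvPolynomial (Fin 2) ℂ) * X 0 ^ (e i - 1) * X 1 ^ (e i - 1) * X 0 * X 1
          = C (α i) * (X 0 ^ (e i - 1) * X 0) * (X 1 ^ (e i - 1) * X 1) := by ring
        _ = C (α i) * X 0 ^ e i * X 1 ^ e i := by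
            rw [← pow_succ, ← pow_succ, Nat.sub_add_cancel hi1]
    rw [Matrix.det_fin_two_of]
    calc s * X 0 * X 1 - s * X 1 * -X 0 = 2 * (s * X 0 * X 1) := by ring
      _ = 2 * h := by rw [hsx]
end
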